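/- arXiv:1412.4035 — 3 statements merged into one kernel-verified Lean document; each statement's English description precedes it below -/
import Mathlib

section
/- For all x, y in the unit ball B^n, ρ(x,y) ≤ 2·c(x,y), where ρ is the hyperbolic metric and c the Cassinian metric of B^n. -/
/-!
Put `x` on the outer side (`‖y‖ ≤ ‖x‖`) and test the Cassinian supremum at the radial projection
`p = x / ‖x‖`: then `|x - p| |p - y| ≤ (1 - |x|)(1 + |y|) ≤ √((1 - |x|²)(1 - |y|²))`, so
`sinh (ρ(x, y) / 2) ≤ c(x, y)`, and `arsinh t ≤ t` for `t ≥ 0` finishes.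
-/

open Metric Set

abbrev E (n : ℕ) := EuclideanSpace ℝ (Fin n)

/-- The Cassinian metric of a domain `D`. -/
noncomputable def cassinian {n : ℕ} (D : Set (E n)) (x y : E n) : ℝ :=
  ⨆ p : frontier D, dist x y / (dist x (p : E n) * dist (p : E n) y)

/-- The hyperbolic metric of the unit ball. -/
noncomputable def rhoBall {n : ℕ} (x y : E n) : ℝ :=
  2 * Real.arsinh (dist x y / Real.sqrt ((1 - ‖x‖ ^ 2) * (1 - ‖y‖ ^ 2)))

lemma Real.arsinh_le_self {t : ℝ} (ht : 0 ≤ t) : Real.arsinh t ≤ t := by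
  rw [← Real.sinh_le_sinh, Real.sinh_arsinh]
  exact Real.self_le_sinh_iff.mpr ht

lemma sq_one_sub_mul_one_add_le {a b : ℝ} (hb : 0 ≤ b) (hba : b ≤ a) (ha : a ≤ 1) :
    ((1 - a) * (1 + b)) ^ 2 ≤ (1 - a ^ 2) * (1 - b ^ 2) := by
  have key : 0 ≤ (1 - a) * (1 + b) * (a - b) := by
    have := sub_nonneg.mpr ha; have := sub_nonneg.mpr hba; positivity
  nlinarith

lemma dist_inv_norm_smul_self {V : Type*} [NormedAddCommGroup V] [NormedSpace ℝ V] {x : V}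
    (hx : x ≠ 0) (h1 : ‖x‖ ≤ 1) : dist x (‖x‖⁻¹ • x) = 1 - ‖x‖ := by
  have hpos : 0 < ‖x‖ := norm_pos_iff.mpr hx
  rw [dist_eq_norm, show x - ‖x‖⁻¹ • x = (1 - ‖x‖⁻¹) • x by rw [sub_smul, one_smul], norm_smul, Real.norm_eq_abs,
    abs_of_nonpos (by simp [one_le_inv_iff₀, hpos, h1]), neg_sub, sub_mul,
    inv_mul_cancel₀ hpos.ne', one_mul]

lemma sub_dist_le_dist_of_mem_sphere {X : Type*} [PseudoMetricSpace X] {c q : X} {r : ℝ}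
    (hq : q ∈ sphere c r) (x : X) : r - dist x c ≤ dist x q := by
  have := dist_triangle q x c
  rw [mem_sphere.mp hq, dist_comm q x] at this
  linarith

section Cassinian

variable {n : ℕ}

lemma cassinian_comm (D : Set (E n)) (x y : E n) : cassinian D x y = cassinian D y x := by
  simp only [cassinian, dist_comm x y, dist_comm x (_ : E n), dist_comm (_ : E n) y, mul_comm]

lemma cassinian_nonneg (D : Set (E n)) (x y : E n) : 0 ≤ cassinian D x y :=
  Real.iSup_nonneg fun _ => by positivity

lemma div_le_cassinian_ball {c x y p : E n} {r : ℝ} (hx : x ∈ ball c r) (hy : y ∈ ball c r)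
    (hp : p ∈ sphere c r) :
    dist x y / (dist x p * dist p y) ≤ cassinian (ball c r) x y := by
  have hr : r ≠ 0 := (pos_of_mem_ball hx).ne'
  have hx' := mem_ball.mp hx
  have hy' := mem_ball.mp hy
  have hbdd : BddAbove (range fun q : frontier (ball c r) =>
      dist x y / (dist x (q : E n) * dist (q : E n) y)) := by
    refine ⟨dist x y / ((r - dist x c) * (r - dist y c)), ?_⟩
    rintro _ ⟨⟨q, hq⟩, rfl⟩
    rw [frontier_ball c hr] at hq
    have hxq := sub_dist_le_dist_of_mem_sphere hq x
    have hyq := sub_dist_le_dist_of_mem_sphere hq y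
    rw [dist_comm y q] at hyq
    dsimp only
    gcongr
  exact le_ciSup hbdd ⟨p, by rwa [frontier_ball c hr]⟩

end Cassinian

lemma dist_div_sqrt_le_cassinian_of_norm_le {n : ℕ} {x y : E n} (hx : ‖x‖ < 1)
    (hyx : ‖y‖ ≤ ‖x‖) :
    dist x y / √((1 - ‖x‖ ^ 2) * (1 - ‖y‖ ^ 2)) ≤ cassinian (ball (0 : E n) 1) x y := by
  rcases eq_or_ne x 0 with rfl | hx0
  · obtain rfl : y = 0 := norm_le_zero_iff.mp (by simpa using hyx)
    simpa using cassinian_nonneg _ 0 0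
  have hy : ‖y‖ < 1 := hyx.trans_lt hx
  set p : E n := ‖x‖⁻¹ • x
  have hp : p ∈ sphere (0 : E n) 1 := by
    simpa [p] using norm_smul_inv_norm (𝕜 := ℝ) hx0
  have hxp : dist x p = 1 - ‖x‖ := dist_inv_norm_smul_self hx0 hx.le
  have hpy : dist p y ≤ 1 + ‖y‖ := by
    simpa [mem_sphere_zero_iff_norm.mp hp] using dist_le_norm_add_norm p y
  have hpy_ge : 1 - ‖y‖ ≤ dist p y := by
    simpa [dist_comm] using sub_dist_le_dist_of_mem_sphere hp y
  have hprod : dist x p * dist p y ≤ √((1 - ‖x‖ ^ 2) * (1 - ‖y‖ ^ 2)) := by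
    refine Real.le_sqrt_of_sq_le ((pow_le_pow_left₀ (by positivity) ?_ 2).trans
      (sq_one_sub_mul_one_add_le (norm_nonneg y) hyx hx.le))
    rw [hxp]
    gcongr
  calc dist x y / √((1 - ‖x‖ ^ 2) * (1 - ‖y‖ ^ 2))
      ≤ dist x y / (dist x p * dist p y) := by
        gcongr
        rw [hxp]
        exact mul_pos (by linarith) (by linarith)
    _ ≤ cassinian (ball (0 : E n) 1) x y :=
        div_le_cassinian_ball (mem_ball_zero_iff.mpr hx) (mem_ball_zero_iff.mpr hy) hp

lemma dist_div_sqrt_le_cassinian {n : ℕ} {x y : E n} (hx : x ∈ ball (0 : E n) 1)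
    (hy : y ∈ ball (0 : E n) 1) :
    dist x y / √((1 - ‖x‖ ^ 2) * (1 - ‖y‖ ^ 2)) ≤ cassinian (ball (0 : E n) 1) x y := by
  rw [mem_ball_zero_iff] at hx hy
  rcases le_total ‖y‖ ‖x‖ with hyx | hxy
  · exact dist_div_sqrt_le_cassinian_of_norm_le hx hyx
  · simpa only [dist_comm y x, mul_comm (1 - ‖y‖ ^ 2), cassinian_comm]
      using dist_div_sqrt_le_cassinian_of_norm_le hy hxy

theorem rho_le_two_cassinian_general (n : ℕ) (x y : E n)
    (hx : x ∈ ball (0 : E n) 1) (hy : y ∈ ball (0 : E n) 1) :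
    rhoBall x y ≤ 2 * cassinian (ball (0 : E n) 1) x y := by
  unfold rhoBall
  gcongr
  exact (Real.arsinh_le_self (by positivity)).trans (dist_div_sqrt_le_cassinian hx hy)

theorem rho_le_two_cassinian (n : ℕ) (hn : 2 ≤ n) (x y : E n)
    (hx : x ∈ ball (0 : E n) 1) (hy : y ∈ ball (0 : E n) 1) :
    rhoBall x y ≤ 2 * cassinian (ball (0 : E n) 1) x y :=
  rho_le_two_cassinian_general n x y hx hy
end

section
/- For all x, y in the unit ball B^n with max(|x|,|y|) ≤ λ < 1, c(x,y) ≤ j(x,y)/(1-λ)², where c is the Cassinian metric and j the distance ratio metric of B^n. -/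
open Metric Set

/-- The distance ratio metric of the unit ball. -/
noncomputable def jBall {n : ℕ} (x y : E n) : ℝ :=
  Real.log (1 + dist x y / min (1 - ‖x‖) (1 - ‖y‖))

/-
A boundary point `p` of the unit ball satisfies `|x - p| ≥ 1 - |x|` and `|p - y| ≥ 1 - |y|`,
so `c(x, y) ≤ |x - y| / ((1 - |x|)(1 - |y|)) ≤ t / (1 - λ)`, where
`t = |x - y| / min(1 - |x|, 1 - |y|)`. Since `t ≤ 2λ / (1 - λ)`, the bound
`2t / (t + 2) ≤ log (1 + t)` gives `(1 - λ) t ≤ log (1 + t) = j(x, y)`.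
-/

lemma one_sub_norm_le_dist_of_norm_eq_one {F : Type*} [SeminormedAddCommGroup F] {x p : F}
    (hp : ‖p‖ = 1) : 1 - ‖x‖ ≤ dist x p := by
  rw [dist_comm, dist_eq_norm, ← hp]
  exact norm_sub_norm_le p x

lemma cassinian_ball_le {n : ℕ} {x y : E n} (hx : ‖x‖ < 1) (hy : ‖y‖ < 1) :
    cassinian (ball (0 : E n) 1) x y ≤ dist x y / ((1 - ‖x‖) * (1 - ‖y‖)) := by
  have hx' := sub_pos.2 hx
  have hy' := sub_pos.2 hy
  refine Real.iSup_le (fun ⟨p, hp⟩ => ?_) (by positivity)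
  have hp : ‖p‖ = 1 := by simpa using frontier_ball_subset_sphere hp
  have hxp := one_sub_norm_le_dist_of_norm_eq_one (x := x) hp
  have hyp := one_sub_norm_le_dist_of_norm_eq_one (x := y) hp
  rw [dist_comm y] at hyp
  gcongr

lemma mul_le_log_one_add {a t : ℝ} (ht : 0 ≤ t) (h : a * (t + 2) ≤ 2) :
    a * t ≤ Real.log (1 + t) := by
  refine le_trans ?_ (Real.le_log_one_add_of_nonneg ht)
  rw [le_div_iff₀ (by linarith)]
  nlinarith

lemma one_sub_mul_div_min_le_jBall {n : ℕ} {lam : ℝ} (hlam : lam < 1) {x y : E n}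
    (hxy : max ‖x‖ ‖y‖ ≤ lam) :
    (1 - lam) * (dist x y / min (1 - ‖x‖) (1 - ‖y‖)) ≤ jBall x y := by
  obtain ⟨hx, hy⟩ := max_le_iff.1 hxy
  have hm : 1 - lam ≤ min (1 - ‖x‖) (1 - ‖y‖) := le_min (by linarith) (by linarith)
  have hdist : dist x y ≤ ‖x‖ + ‖y‖ := by
    rw [dist_eq_norm]
    exact norm_sub_le x y
  refine mul_le_log_one_add (div_nonneg dist_nonneg (by linarith)) ?_
  have hscaled : (1 - lam) * (dist x y / min (1 - ‖x‖) (1 - ‖y‖)) ≤ dist x y := by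
    rw [mul_div_assoc']
    exact div_le_of_le_mul₀ (by linarith) dist_nonneg (by rw [mul_comm]; gcongr)
  linarith

theorem cassinian_le_jBall_general (n : ℕ) (lam : ℝ) (hlam : lam < 1) (x y : E n)
    (hxy : max ‖x‖ ‖y‖ ≤ lam) :
    cassinian (ball (0 : E n) 1) x y ≤ jBall x y / (1 - lam) ^ 2 := by
  obtain ⟨hx, hy⟩ := max_le_iff.1 hxy
  set m := min (1 - ‖x‖) (1 - ‖y‖)
  have hlam' : 0 < 1 - lam := by linarith
  have hm : 1 - lam ≤ m := le_min (by linarith) (by linarith)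
  have hprod : m * (1 - lam) ≤ (1 - ‖x‖) * (1 - ‖y‖) :=
    mul_le_mul (min_le_left _ _) (by linarith) hlam'.le (by linarith)
  calc cassinian (ball (0 : E n) 1) x y
      ≤ dist x y / ((1 - ‖x‖) * (1 - ‖y‖)) :=
        cassinian_ball_le (by linarith) (by linarith)
    _ ≤ dist x y / (m * (1 - lam)) := by gcongr; exact mul_pos (by linarith) hlam'
    _ = (1 - lam) * (dist x y / m) / (1 - lam) ^ 2 := by field_simp
    _ ≤ jBall x y / (1 - lam) ^ 2 := by gcongr; exact one_sub_mul_div_min_le_jBall hlam hxy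

theorem cassinian_le_jBall (n : ℕ) (hn : 2 ≤ n) (lam : ℝ) (hlam : lam < 1) (x y : E n)
    (hx : x ∈ ball (0 : E n) 1) (hy : y ∈ ball (0 : E n) 1)
    (hxy : max ‖x‖ ‖y‖ ≤ lam) :
    cassinian (ball (0 : E n) 1) x y ≤ jBall x y / (1 - lam) ^ 2 :=
  cassinian_le_jBall_general n lam hlam x y hxy
end

section
/- The bound (1+|a|)/(1-|a|) in the Möbius distortion of the Cassinian metric is sharp: for 0 < |a| < 1 with a = |a|e₁ and σ the inversion in the sphere S^{n-1}(a/|a|², √(1-|a|²)/|a|) (which maps B^n to B^n with σ(a)=0), taking x = 0 and y = t·e₁ with -1 < t < 0, one has c(σ(x), σ(y))/c(x,y) = (1+|a|)/(1-|a|). -/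
open Metric Set

/-- The first standard basis vector of R^n (n >= 2). -/
noncomputable def e1 (n : ℕ) (hn : 2 ≤ n) : E n := EuclideanSpace.single ⟨0, by omega⟩ 1

/-!
The inversion `σ` fixes the line `ℝ a` and acts on it by `v • a ↦ ((1 - v) / (1 - |a|² v)) • a`,
so `σ 0 = a` and `σ (t e₁) = s e₁` with `s = (|a| - t) / (1 - |a| t)`. For two points `u • w`, `v • w`
on a radius through the unit vector `w` with `0 ≤ u, v < 1`, the boundary point `w` is nearest to both,
so `c(u w, v w) = |u - v| / ((1 - u)(1 - v))`. Both Cassinian distances are therefore explicit and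
their quotient simplifies to `(1 + |a|) / (1 - |a|)`.
-/

theorem cassinian_eq_of_forall_le {n : ℕ} {D : Set (E n)} {x y p₀ : E n} (hp₀ : p₀ ∈ frontier D)
    (hmin : ∀ p ∈ frontier D, dist x p₀ * dist p₀ y ≤ dist x p * dist p y)
    (hpos : 0 < dist x p₀ * dist p₀ y) :
    cassinian D x y = dist x y / (dist x p₀ * dist p₀ y) := by
  have hbound : ∀ p : frontier D,
      dist x y / (dist x (p : E n) * dist (p : E n) y) ≤ dist x y / (dist x p₀ * dist p₀ y) :=
    fun p => div_le_div_of_nonneg_left dist_nonneg hpos (hmin p p.2)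
  have : Nonempty (frontier D) := ⟨⟨p₀, hp₀⟩⟩
  refine le_antisymm (ciSup_le hbound) ?_
  exact le_ciSup_of_le ⟨_, forall_mem_range.2 hbound⟩ ⟨p₀, hp₀⟩ le_rfl

theorem one_sub_norm_le_dist {V : Type*} [SeminormedAddCommGroup V] {x p : V} (hp : ‖p‖ = 1) :
    1 - ‖x‖ ≤ dist x p := by
  rw [dist_comm, dist_eq_norm, ← hp]
  exact norm_sub_norm_le p x

theorem cassinian_ball_smul_smul {n : ℕ} {w : E n} (hw : ‖w‖ = 1) {u v : ℝ}
    (hu : 0 ≤ u) (hu1 : u < 1) (hv : 0 ≤ v) (hv1 : v < 1) :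
    cassinian (ball 0 1) (u • w) (v • w) = |u - v| / ((1 - u) * (1 - v)) := by
  have hnorm : ∀ r : ℝ, 0 ≤ r → ‖r • w‖ = r := fun r hr => by
    rw [norm_smul, hw, mul_one, Real.norm_of_nonneg hr]
  have hdist : ∀ r s : ℝ, dist (r • w) (s • w) = |r - s| := fun r s => by
    rw [dist_eq_norm, ← sub_smul, norm_smul, hw, mul_one, Real.norm_eq_abs]
  have hdu : dist (u • w) w = 1 - u := by
    simpa [abs_of_neg (sub_neg.2 hu1)] using hdist u 1
  have hdv : dist w (v • w) = 1 - v := by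
    simpa [abs_of_pos (sub_pos.2 hv1)] using hdist 1 v
  have hfr : frontier (ball (0 : E n) 1) = sphere 0 1 := frontier_ball 0 one_ne_zero
  rw [cassinian_eq_of_forall_le (p₀ := w), hdist, hdu, hdv]
  · simpa [hfr] using hw
  · intro p hp
    rw [hfr, mem_sphere_zero_iff_norm] at hp
    have hup := one_sub_norm_le_dist (x := u • w) hp
    have hvp := one_sub_norm_le_dist (x := v • w) hp
    rw [hnorm u hu] at hup
    rw [hnorm v hv, dist_comm] at hvp
    rw [hdu, hdv]
    exact mul_le_mul hup hvp (by linarith) dist_nonneg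
  · rw [hdu, hdv]
    exact mul_pos (by linarith) (by linarith)

theorem inversion_smul_self {V : Type*} [NormedAddCommGroup V] [InnerProductSpace ℝ V] {a : V}
    (ha : a ≠ 0) (ha1 : ‖a‖ ≤ 1) {v : ℝ} (hv : ‖a‖ ^ 2 * v ≠ 1) :
    EuclideanGeometry.inversion ((‖a‖ ^ 2)⁻¹ • a) (√(1 - ‖a‖ ^ 2) / ‖a‖) (v • a) =
      ((1 - v) / (1 - ‖a‖ ^ 2 * v)) • a := by
  have hr : ‖a‖ ≠ 0 := norm_ne_zero_iff.2 ha
  have hsub : v • a - (‖a‖ ^ 2)⁻¹ • a = (v - (‖a‖ ^ 2)⁻¹) • a := (sub_smul _ _ _).symm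
  have hsq : √(1 - ‖a‖ ^ 2) ^ 2 = 1 - ‖a‖ ^ 2 := Real.sq_sqrt (by nlinarith [norm_nonneg a])
  rw [EuclideanGeometry.inversion, dist_eq_norm, vsub_eq_sub, hsub, norm_smul, vadd_eq_add,
    smul_smul, ← add_smul]
  congr 1
  rw [div_pow, div_pow, mul_pow, Real.norm_eq_abs, sq_abs, hsq]
  field_simp
  ring

theorem inversion_smul_of_norm_eq_one {V : Type*} [NormedAddCommGroup V] [InnerProductSpace ℝ V]
    {w : V} (hw : ‖w‖ = 1) {a v : ℝ} (ha : 0 < a) (ha1 : a ≤ 1) (hv : a * v ≠ 1) :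
    EuclideanGeometry.inversion ((‖a • w‖ ^ 2)⁻¹ • (a • w)) (√(1 - ‖a • w‖ ^ 2) / ‖a • w‖) (v • w) =
      ((a - v) / (1 - a * v)) • w := by
  have hnorm : ‖a • w‖ = a := by rw [norm_smul, hw, mul_one, Real.norm_of_nonneg ha.le]
  have haw : a • w ≠ 0 := norm_ne_zero_iff.1 (by rw [hnorm]; exact ha.ne')
  rw [show v • w = (v / a) • a • w by rw [smul_smul, div_mul_cancel₀ _ ha.ne'],
    inversion_smul_self haw (by rw [hnorm]; exact ha1) (by rw [hnorm]; field_simp; exact hv), hnorm, smul_smul]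
  congr 1
  field_simp

theorem cassinian_ball_zero_smul {n : ℕ} {w : E n} (hw : ‖w‖ = 1) {t : ℝ} (ht : |t| < 1) :
    cassinian (ball 0 1) 0 (t • w) = |t| / (1 - |t|) := by
  obtain ⟨w', hw', htw⟩ : ∃ w' : E n, ‖w'‖ = 1 ∧ t • w = |t| • w' := by
    rcases le_total 0 t with h | h
    · exact ⟨w, hw, by rw [abs_of_nonneg h]⟩
    · exact ⟨-w, by rwa [norm_neg], by rw [abs_of_nonpos h, neg_smul, smul_neg, neg_neg]⟩
  have h := cassinian_ball_smul_smul hw' le_rfl one_pos (abs_nonneg t) ht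
  rw [zero_smul] at h
  rw [htw, h]
  simp

theorem cassinian_mobius_sharp (n : ℕ) (hn : 2 ≤ n) (al t : ℝ)
    (hal : 0 < al) (hal1 : al < 1) (ht : -1 < t) (ht0 : t < 0) :
    cassinian (ball (0 : E n) 1)
        (EuclideanGeometry.inversion ((‖al • e1 n hn‖ ^ 2)⁻¹ • (al • e1 n hn))
          (Real.sqrt (1 - ‖al • e1 n hn‖ ^ 2) / ‖al • e1 n hn‖) (0 : E n))
        (EuclideanGeometry.inversion ((‖al • e1 n hn‖ ^ 2)⁻¹ • (al • e1 n hn))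
          (Real.sqrt (1 - ‖al • e1 n hn‖ ^ 2) / ‖al • e1 n hn‖) (t • e1 n hn)) /
      cassinian (ball (0 : E n) 1) (0 : E n) (t • e1 n hn) = (1 + al) / (1 - al) := by
  have he : ‖e1 n hn‖ = 1 := by simp [e1]
  have hD : 0 < 1 - al * t := by nlinarith
  have hσ0 := inversion_smul_of_norm_eq_one he hal hal1.le (v := 0) (by simp)
  rw [zero_smul, sub_zero, mul_zero, sub_zero, div_one] at hσ0
  rw [hσ0, inversion_smul_of_norm_eq_one he hal hal1.le (sub_ne_zero.1 hD.ne').symm,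
    cassinian_ball_zero_smul he (abs_lt.2 ⟨ht, by linarith⟩), abs_of_neg ht0, sub_neg_eq_add]
  set s := (al - t) / (1 - al * t) with hs
  have h1s : 1 - s = (1 - al) * (1 + t) / (1 - al * t) := by
    rw [hs]; field_simp; ring
  have hsa : s - al = -t * ((1 - al) * (1 + al)) / (1 - al * t) := by
    rw [hs]; field_simp; ring
  have hs0 : 0 ≤ s := div_nonneg (by linarith) hD.le
  have hs1 : s < 1 := by
    rw [← sub_pos, h1s]; exact div_pos (mul_pos (by linarith) (by linarith)) hD
  have hals : 0 ≤ s - al := by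
    rw [hsa]; exact div_nonneg (mul_nonneg (by linarith) (by nlinarith)) hD.le
  rw [cassinian_ball_smul_smul he hal.le hal1 hs0 hs1, abs_sub_comm, abs_of_nonneg hals, h1s, hsa]
  have : 1 - al ≠ 0 := by linarith
  have : 1 + t ≠ 0 := by linarith
  have : t ≠ 0 := ht0.ne
  -- so that `field_simp` sees `1 - al * t` as an atom it knows to be nonzero
  generalize 1 - al * t = D at hD ⊢
  field_simp
end
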